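/- (Bottom-block step of the maximality proof, Appendix B.) Let r ≥ 1 and q ≥ 1 be integers. Let S, S̄ ∈ ℂ^{(r+q)×(r+q)} be Hermitian positive definite with block partitions S = [[S₂₂,S₂₃],[S₃₂,S₃₃]], S̄ = [[S̄₂₂,S̄₂₃],[S̄₃₂,S̄₃₃]] (top-left blocks r×r, bottom-right blocks q×q), and let w = (w₂,w₃), w̄ = (w̄₂,w̄₃) ∈ ℂ^{r+q} be partitioned accordingly. Suppose w₃† S₃₃⁻¹ w₃ = w̄₃† S̄₃₃⁻¹ w̄₃ and (w₂ − S₂₃S₃₃⁻¹w₃)† (S₂₂ − S₂₃S₃₃⁻¹S₃₂)⁻¹ (w₂ − S₂₃S₃₃⁻¹w₃) = (w̄₂ − S̄₂₃S̄₃₃⁻¹w̄₃)† (S̄₂₂ − S̄₂₃S̄₃₃⁻¹S̄₃₂)⁻¹ (w̄₂ − S̄₂₃S̄₃₃⁻¹w̄₃). Then there exists a block upper-triangular matrix D = [[D₂₂,D₂₃],[0,D₃₃]] with D₂₂ ∈ ℂ^{r×r} and D₃₃ ∈ ℂ^{q×q} invertible, such that w = D w̄ and S = D S̄ D†. -/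

import Mathlib

open Matrix ComplexOrder

/-- Top block (size `r`) of a partitioned vector `w = (w₂, w₃)`. -/
def blkTop {r q : ℕ} (w : Fin r ⊕ Fin q → ℂ) : Fin r → ℂ := fun i => w (Sum.inl i)

/-- Bottom block (size `q`) of a partitioned vector `w = (w₂, w₃)`. -/
def blkBot {r q : ℕ} (w : Fin r ⊕ Fin q → ℂ) : Fin q → ℂ := fun i => w (Sum.inr i)

/-- Block `S₂₂` of `S = [[S₂₂, S₂₃], [S₃₂, S₃₃]]`. -/
def B22 {r q : ℕ} (S : Matrix (Fin r ⊕ Fin q) (Fin r ⊕ Fin q) ℂ) :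
    Matrix (Fin r) (Fin r) ℂ := S.submatrix Sum.inl Sum.inl

/-- Block `S₂₃`. -/
def B23 {r q : ℕ} (S : Matrix (Fin r ⊕ Fin q) (Fin r ⊕ Fin q) ℂ) :
    Matrix (Fin r) (Fin q) ℂ := S.submatrix Sum.inl Sum.inr

/-- Block `S₃₂`. -/
def B32 {r q : ℕ} (S : Matrix (Fin r ⊕ Fin q) (Fin r ⊕ Fin q) ℂ) :
    Matrix (Fin q) (Fin r) ℂ := S.submatrix Sum.inr Sum.inl

/-- Block `S₃₃`. -/
def B33 {r q : ℕ} (S : Matrix (Fin r ⊕ Fin q) (Fin r ⊕ Fin q) ℂ) :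
    Matrix (Fin q) (Fin q) ℂ := S.submatrix Sum.inr Sum.inr

/-- `w₂ − S₂₃ S₃₃⁻¹ w₃`. -/
noncomputable def wdot {r q : ℕ} (w : Fin r ⊕ Fin q → ℂ)
    (S : Matrix (Fin r ⊕ Fin q) (Fin r ⊕ Fin q) ℂ) : Fin r → ℂ :=
  blkTop w - (B23 S * (B33 S)⁻¹) *ᵥ blkBot w

/-- The Schur complement `S₂₂ − S₂₃ S₃₃⁻¹ S₃₂`. -/
noncomputable def schur {r q : ℕ} (S : Matrix (Fin r ⊕ Fin q) (Fin r ⊕ Fin q) ℂ) :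
    Matrix (Fin r) (Fin r) ℂ :=
  B22 S - B23 S * (B33 S)⁻¹ * B32 S

/-! Conjugating by `L_S = [[1, S₂₃S₃₃⁻¹], [0, 1]]` turns `S` into `diag(schur S, S₃₃)` and
`(w₂ − S₂₃S₃₃⁻¹w₃, w₃)` into `w`. A pair `(P, x)` with `P` positive definite is determined up
to `(P, x) ↦ (GPGᴴ, Gx)` by the number `x†P⁻¹x`: writing `P = BBᴴ`, it equals `‖B⁻¹x‖²`, and a
unitary matrix carries any vector to any other of the same norm. Hence
`D = L_S · diag(G₂, G₃) · L_S̄⁻¹`. -/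

namespace Matrix

variable {𝕜 n : Type*} [RCLike 𝕜] [Fintype n] [DecidableEq n]

lemma exists_mem_unitaryGroup_mulVec_single (i : n) (u : n → 𝕜) :
    ∃ U ∈ unitaryGroup n 𝕜, U *ᵥ Pi.single i (‖WithLp.toLp 2 u‖ : 𝕜) = u := by
  rcases eq_or_ne u 0 with rfl | hu
  · exact ⟨1, one_mem _, by simp⟩
  have hu' : (‖WithLp.toLp 2 u‖ : 𝕜) ≠ 0 := by simpa using hu
  have hunit : Orthonormal 𝕜
      (({i} : Set n).domRestrict fun _ => (‖WithLp.toLp 2 u‖⁻¹ : 𝕜) • WithLp.toLp 2 u) :=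
    orthonormal_subsingleton_iff.mpr fun _ => by simp [norm_smul, hu]
  obtain ⟨b, hb⟩ := hunit.exists_orthonormalBasis_extension_of_card_eq finrank_euclideanSpace
  refine ⟨(EuclideanSpace.basisFun n 𝕜).toBasis.toMatrix b,
    (EuclideanSpace.basisFun n 𝕜).toMatrix_orthonormalBasis_mem_unitary b, ?_⟩
  ext k
  simp [mulVec_single, Module.Basis.toMatrix_apply, hb i rfl, mul_comm _ (u k), hu']

lemma exists_mem_unitaryGroup_mulVec_eq {u v : n → 𝕜} (h : star u ⬝ᵥ u = star v ⬝ᵥ v) :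
    ∃ U ∈ unitaryGroup n 𝕜, U *ᵥ v = u := by
  cases isEmpty_or_nonempty n
  · exact ⟨1, one_mem _, Subsingleton.elim _ _⟩
  obtain ⟨i⟩ := ‹Nonempty n›
  have hnorm : ‖WithLp.toLp 2 u‖ = ‖WithLp.toLp 2 v‖ := by
    rw [← sq_eq_sq₀ (norm_nonneg _) (norm_nonneg _), ← RCLike.ofReal_inj (K := 𝕜)]
    simpa [← inner_self_eq_norm_sq_to_K, EuclideanSpace.inner_eq_star_dotProduct,
      dotProduct_comm] using h
  obtain ⟨U, hU, hUu⟩ := exists_mem_unitaryGroup_mulVec_single i u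
  obtain ⟨V, hV, hVv⟩ := exists_mem_unitaryGroup_mulVec_single i v
  refine ⟨U * star V, mul_mem hU (Unitary.star_mem hV), ?_⟩
  rw [← hVv, mulVec_mulVec, Matrix.mul_assoc, Unitary.star_mul_self_of_mem hV, Matrix.mul_one,
    ← hnorm, hUu]

open scoped MatrixOrder in
lemma PosDef.exists_isUnit_eq_mul_conjTranspose {P : Matrix n n 𝕜} (hP : P.PosDef) :
    ∃ B : Matrix n n 𝕜, IsUnit B ∧ P = B * Bᴴ := by
  obtain ⟨A, rfl⟩ := CStarAlgebra.nonneg_iff_eq_star_mul_self.mp hP.posSemidef.nonneg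
  refine ⟨Aᴴ, ?_, by simp [star_eq_conjTranspose]⟩
  have hdet := (isUnit_iff_isUnit_det _).mp hP.isUnit
  rw [star_eq_conjTranspose, det_mul] at hdet
  exact (isUnit_iff_isUnit_det _).mpr (isUnit_of_mul_isUnit_left hdet)

lemma star_dotProduct_mul_conjTranspose_inv_mulVec (B : Matrix n n 𝕜) (x : n → 𝕜) :
    star x ⬝ᵥ ((B * Bᴴ)⁻¹ *ᵥ x) = star (B⁻¹ *ᵥ x) ⬝ᵥ (B⁻¹ *ᵥ x) := by
  rw [Matrix.mul_inv_rev, ← conjTranspose_nonsing_inv, star_mulVec, dotProduct_mulVec,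
    ← vecMul_vecMul, dotProduct_mulVec]

lemma exists_isUnit_mulVec_eq_and_eq_mul_mul_conjTranspose {P Q : Matrix n n 𝕜}
    (hP : P.PosDef) (hQ : Q.PosDef) {x y : n → 𝕜}
    (h : star x ⬝ᵥ (P⁻¹ *ᵥ x) = star y ⬝ᵥ (Q⁻¹ *ᵥ y)) :
    ∃ G : Matrix n n 𝕜, IsUnit G ∧ x = G *ᵥ y ∧ P = G * Q * Gᴴ := by
  obtain ⟨B, hB, rfl⟩ := hP.exists_isUnit_eq_mul_conjTranspose
  obtain ⟨C, hC, rfl⟩ := hQ.exists_isUnit_eq_mul_conjTranspose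
  rw [star_dotProduct_mul_conjTranspose_inv_mulVec B,
    star_dotProduct_mul_conjTranspose_inv_mulVec C] at h
  obtain ⟨U, hU, hUy⟩ := exists_mem_unitaryGroup_mulVec_eq h
  have hBdet := (isUnit_iff_isUnit_det B).mp hB
  have hCdet := (isUnit_iff_isUnit_det C).mp hC
  refine ⟨B * U * C⁻¹, (hB.mul (Unitary.isUnit_coe (U := ⟨U, hU⟩))).mul
    (isUnit_nonsing_inv_iff.mpr hC), ?_, ?_⟩
  · rw [← mulVec_mulVec, ← mulVec_mulVec, hUy, mulVec_mulVec, mul_nonsing_inv _ hBdet,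
      one_mulVec]
  · have hUU : U * (Uᴴ * Bᴴ) = Bᴴ := by
      rw [← Matrix.mul_assoc, ← star_eq_conjTranspose, Unitary.mul_star_self_of_mem hU,
        Matrix.one_mul]
    have hCH : IsUnit Cᴴ.det := by simpa [det_conjTranspose] using hCdet
    simp only [conjTranspose_mul, conjTranspose_nonsing_inv, Matrix.mul_assoc,
      nonsing_inv_mul_cancel_left _ _ hCdet, mul_nonsing_inv_cancel_left _ _ hCH, hUU]

end Matrix

section Transport

variable {n α : Type*} [Fintype n] [DecidableEq n] [CommRing α] [StarRing α]

lemma mul_mul_conjTranspose_mul_eq_of_mul_eq_one {M N : Matrix n n α} (h : M * N = 1)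
    (A Δ : Matrix n n α) : A * M * (N * Δ * Nᴴ) * (A * M)ᴴ = A * Δ * Aᴴ := by
  have hH : Nᴴ * Mᴴ = 1 := by rw [← conjTranspose_mul, h, conjTranspose_one]
  simp only [conjTranspose_mul, Matrix.mul_assoc, ← Matrix.mul_assoc M N, h, Matrix.one_mul]
  rw [← Matrix.mul_assoc Nᴴ, hH, Matrix.one_mul]

lemma mulVec_eq_and_eq_mul_mul_conjTranspose_of_mul_eq_one {L M N G Δ Δb S Sb : Matrix n n α}
    {v vb x xb : n → α} (hMN : M * N = 1) (hv : L *ᵥ x = v) (hvb : N *ᵥ xb = vb)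
    (hx : x = G *ᵥ xb) (hS : S = L * Δ * Lᴴ) (hSb : Sb = N * Δb * Nᴴ)
    (hΔ : Δ = G * Δb * Gᴴ) :
    v = (L * G * M) *ᵥ vb ∧ S = L * G * M * Sb * (L * G * M)ᴴ := by
  subst hv hvb hx hS hSb hΔ
  refine ⟨?_, ?_⟩
  · simp only [mulVec_mulVec, Matrix.mul_assoc, hMN, Matrix.mul_one]
  · rw [mul_mul_conjTranspose_mul_eq_of_mul_eq_one hMN]
    simp only [conjTranspose_mul, Matrix.mul_assoc]

end Transport

lemma fromBlocks_one_mul_fromBlocks_mul_fromBlocks_one {l m α : Type*} [Fintype l] [Fintype m]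
    [DecidableEq l] [DecidableEq m] [Ring α] (X Y : Matrix l m α) (A : Matrix l l α)
    (B : Matrix m m α) :
    fromBlocks 1 X 0 1 * fromBlocks A 0 0 B * fromBlocks 1 Y 0 1 =
      fromBlocks A (A * Y + X * B) 0 B := by
  simp [fromBlocks_multiply]

lemma fromBlocks_one_neg_mul_fromBlocks_one {l m α : Type*} [Fintype l] [Fintype m]
    [DecidableEq l] [DecidableEq m] [Ring α] (X : Matrix l m α) :
    (fromBlocks 1 (-X) 0 1 : Matrix (l ⊕ m) (l ⊕ m) α) * fromBlocks 1 X 0 1 = 1 := by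
  simpa using fromBlocks_one_mul_fromBlocks_mul_fromBlocks_one (-X) X 1 1

section Blocks

variable {r q : ℕ}

lemma B32_eq_conjTranspose_B23 {S : Matrix (Fin r ⊕ Fin q) (Fin r ⊕ Fin q) ℂ}
    (hS : S.IsHermitian) : B32 S = (B23 S)ᴴ := by
  rw [B23, conjTranspose_submatrix, hS.eq, B32]

lemma isHermitian_B33 {S : Matrix (Fin r ⊕ Fin q) (Fin r ⊕ Fin q) ℂ} (hS : S.IsHermitian) :
    (B33 S).IsHermitian :=
  hS.submatrix Sum.inr

lemma fromBlocks_B22_B23_B32_B33 (S : Matrix (Fin r ⊕ Fin q) (Fin r ⊕ Fin q) ℂ) :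
    fromBlocks (B22 S) (B23 S) (B32 S) (B33 S) = S :=
  fromBlocks_toBlocks S

lemma posDef_B33 {S : Matrix (Fin r ⊕ Fin q) (Fin r ⊕ Fin q) ℂ} (hS : S.PosDef) :
    (B33 S).PosDef :=
  hS.submatrix Sum.inr_injective

lemma fromBlocks_one_mulVec_wdot (w : Fin r ⊕ Fin q → ℂ)
    (S : Matrix (Fin r ⊕ Fin q) (Fin r ⊕ Fin q) ℂ) :
    fromBlocks 1 (B23 S * (B33 S)⁻¹) 0 1 *ᵥ (wdot w S ⊕ᵥ blkBot w) = w := by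
  ext (i | i) <;> simp [fromBlocks_mulVec, wdot, blkTop, blkBot]

lemma eq_fromBlocks_mul_fromBlocks_schur_mul_conjTranspose
    {S : Matrix (Fin r ⊕ Fin q) (Fin r ⊕ Fin q) ℂ} (hS : S.IsHermitian) (h33 : IsUnit (B33 S)) :
    S = fromBlocks 1 (B23 S * (B33 S)⁻¹) 0 1 * fromBlocks (schur S) 0 0 (B33 S) *
      (fromBlocks 1 (B23 S * (B33 S)⁻¹) 0 1)ᴴ := by
  let := h33.invertible
  have hX : (B23 S * (B33 S)⁻¹)ᴴ = (B33 S)⁻¹ * B32 S := by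
    rw [conjTranspose_mul, conjTranspose_nonsing_inv, (isHermitian_B33 hS).eq,
      B32_eq_conjTranspose_B23 hS]
  conv_lhs => rw [← fromBlocks_B22_B23_B32_B33 S, fromBlocks_eq_of_invertible₂₂]
  simp [fromBlocks_conjTranspose, hX, invOf_eq_nonsing_inv, schur]

lemma posDef_schur {S : Matrix (Fin r ⊕ Fin q) (Fin r ⊕ Fin q) ℂ} (hS : S.PosDef) :
    (schur S).PosDef := by
  set X := B23 S * (B33 S)⁻¹
  have hL := fromBlocks_one_neg_mul_fromBlocks_one X
  have hΔ : fromBlocks (schur S) 0 0 (B33 S) =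
      fromBlocks 1 (-X) 0 1 * S * (fromBlocks 1 (-X) 0 1)ᴴ := by
    conv_rhs => rw [eq_fromBlocks_mul_fromBlocks_schur_mul_conjTranspose hS.1
      (posDef_B33 hS).isUnit]
    simpa using (mul_mul_conjTranspose_mul_eq_of_mul_eq_one hL 1 _).symm
  have hΔpos := hS.mul_mul_conjTranspose_same
    (vecMul_injective_iff_isUnit.mpr (IsUnit.of_mul_eq_one _ hL))
  rw [← hΔ] at hΔpos
  exact hΔpos.submatrix Sum.inl_injective

end Blocks

theorem stmt17_general (r q : ℕ)
    (S Sb : Matrix (Fin r ⊕ Fin q) (Fin r ⊕ Fin q) ℂ) (hS : S.PosDef) (hSb : Sb.PosDef)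
    (w wb : Fin r ⊕ Fin q → ℂ)
    (h3 : star (blkBot w) ⬝ᵥ ((B33 S)⁻¹ *ᵥ blkBot w) =
      star (blkBot wb) ⬝ᵥ ((B33 Sb)⁻¹ *ᵥ blkBot wb))
    (h2 : star (wdot w S) ⬝ᵥ ((schur S)⁻¹ *ᵥ wdot w S) =
      star (wdot wb Sb) ⬝ᵥ ((schur Sb)⁻¹ *ᵥ wdot wb Sb)) :
    ∃ D : Matrix (Fin r ⊕ Fin q) (Fin r ⊕ Fin q) ℂ,
      (∀ i j, D (Sum.inr i) (Sum.inl j) = 0) ∧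
      IsUnit (D.submatrix Sum.inl Sum.inl) ∧
      IsUnit (D.submatrix Sum.inr Sum.inr) ∧
      w = D *ᵥ wb ∧ S = D * Sb * Dᴴ := by
  obtain ⟨G₂, hG₂, hw₂, hS₂⟩ := exists_isUnit_mulVec_eq_and_eq_mul_mul_conjTranspose
    (posDef_schur hS) (posDef_schur hSb) h2
  obtain ⟨G₃, hG₃, hw₃, hS₃⟩ := exists_isUnit_mulVec_eq_and_eq_mul_mul_conjTranspose
    (posDef_B33 hS) (posDef_B33 hSb) h3
  have hD := fromBlocks_one_mul_fromBlocks_mul_fromBlocks_one (B23 S * (B33 S)⁻¹)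
    (-(B23 Sb * (B33 Sb)⁻¹)) G₂ G₃
  obtain ⟨hw, hSD⟩ := mulVec_eq_and_eq_mul_mul_conjTranspose_of_mul_eq_one
    (fromBlocks_one_neg_mul_fromBlocks_one _) (fromBlocks_one_mulVec_wdot w S)
    (fromBlocks_one_mulVec_wdot wb Sb) (G := fromBlocks G₂ 0 0 G₃)
    (by simp [fromBlocks_mulVec, hw₂, hw₃])
    (eq_fromBlocks_mul_fromBlocks_schur_mul_conjTranspose hS.1 (posDef_B33 hS).isUnit)
    (eq_fromBlocks_mul_fromBlocks_schur_mul_conjTranspose hSb.1 (posDef_B33 hSb).isUnit)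
    (by simp [hS₂, hS₃, fromBlocks_multiply, fromBlocks_conjTranspose])
  exact ⟨_, by rw [hD]; exact fun i j => rfl, by rwa [hD], by rwa [hD], hw, hSD⟩

/-- Bottom-block step of the maximality proof (Appendix B): if the two quadratic forms
`w₃† S₃₃⁻¹ w₃` and `(w₂ − S₂₃S₃₃⁻¹w₃)† (S₂₂ − S₂₃S₃₃⁻¹S₃₂)⁻¹ (w₂ − S₂₃S₃₃⁻¹w₃)` agree for
`(w, S)` and `(w̄, S̄)` (both `S`, `S̄` Hermitian positive definite), then there exists a
block upper-triangular `D = [[D₂₂, D₂₃], [0, D₃₃]]` with invertible diagonal blocks such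
that `w = D w̄` and `S = D S̄ Dᴴ`. -/
theorem stmt17 (r q : ℕ) (hr : 1 ≤ r) (hq : 1 ≤ q)
    (S Sb : Matrix (Fin r ⊕ Fin q) (Fin r ⊕ Fin q) ℂ) (hS : S.PosDef) (hSb : Sb.PosDef)
    (w wb : Fin r ⊕ Fin q → ℂ)
    (h3 : star (blkBot w) ⬝ᵥ ((B33 S)⁻¹ *ᵥ blkBot w) =
      star (blkBot wb) ⬝ᵥ ((B33 Sb)⁻¹ *ᵥ blkBot wb))
    (h2 : star (wdot w S) ⬝ᵥ ((schur S)⁻¹ *ᵥ wdot w S) =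
      star (wdot wb Sb) ⬝ᵥ ((schur Sb)⁻¹ *ᵥ wdot wb Sb)) :
    ∃ D : Matrix (Fin r ⊕ Fin q) (Fin r ⊕ Fin q) ℂ,
      (∀ i j, D (Sum.inr i) (Sum.inl j) = 0) ∧
      IsUnit (D.submatrix Sum.inl Sum.inl) ∧
      IsUnit (D.submatrix Sum.inr Sum.inr) ∧
      w = D *ᵥ wb ∧ S = D * Sb * Dᴴ :=
  stmt17_general r q S Sb hS hSb w wb h3 h2
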